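/- Let V = ℝ^d, A a Banach algebra with a smooth isometric action α of V, and J skew-symmetric. For a in the smooth subalgebra and z ∈ V with α_x(a) = e(−x·z)a for all x, the Rieffel product with a Schwartz function ξ ∈ S(V; A) given by (a ×_J ξ)(x) = ∫ α_{Jy−x}(a) ξ̂(y) e(x·y) dy satisfies (a ×_J ξ)(x) = e(x·z) a ξ(x + Jz); that is, on homogeneous elements the deformed action is translation by Jz composed with multiplication by a character and by a. -/

import Mathlib

open RealInnerProductSpace MeasureTheory

abbrev Vd (d : ℕ) := EuclideanSpace ℝ (Fin d)

/-- `e(x·y) = exp(2πi⟨x,y⟩)`. -/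
noncomputable def eBil {d : ℕ} (x y : Vd d) : ℂ :=
  Complex.exp (2 * Real.pi * Complex.I * ((⟪x, y⟫ : ℝ) : ℂ))

/-- The `A`-valued Fourier transform `ξ̂(y) = ∫ ξ(x) e(−x·y) dx`. -/
noncomputable def vFourier {d : ℕ} {A : Type*} [NormedAddCommGroup A] [NormedSpace ℂ A]
    (f : Vd d → A) (y : Vd d) : A :=
  ∫ z : Vd d, Complex.exp (-(2 * Real.pi * Complex.I) * ((⟪z, y⟫ : ℝ) : ℂ)) • f z

/-!
Homogeneity turns `α_{Jy−x}(a)` into the scalar `e((x − Jy)·z) a`, and skew-symmetry of `J`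
rewrites `e(−Jy·z)` as `e(Jz·y)`. The integrand thus becomes `e(x·z) a e((x + Jz)·y) ξ̂(y)`,
and Fourier inversion for the Schwartz function `ξ` evaluates the remaining integral to
`ξ(x + Jz)`.
-/

open FourierTransform

section Character

variable {d : ℕ}

lemma norm_eBil (x y : Vd d) : ‖eBil x y‖ = 1 := by
  rw [eBil, Complex.norm_exp]
  simp

lemma continuous_eBil (x : Vd d) : Continuous (eBil x) := by
  unfold eBil
  fun_prop

lemma eBil_add_left (x x' y : Vd d) : eBil (x + x') y = eBil x y * eBil x' y := by
  rw [eBil, eBil, eBil, ← Complex.exp_add, inner_add_left]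
  push_cast
  ring_nf

lemma eBil_neg_skew_left {J : Vd d →ₗ[ℝ] Vd d} (hJ : ∀ x y : Vd d, ⟪J x, y⟫ = -⟪x, J y⟫)
    (y z : Vd d) : eBil (-J y) z = eBil (J z) y := by
  rw [eBil, eBil, inner_neg_left, hJ, neg_neg, real_inner_comm]

lemma eBil_mul_eBil_skew {J : Vd d →ₗ[ℝ] Vd d} (hJ : ∀ x y : Vd d, ⟪J x, y⟫ = -⟪x, J y⟫)
    (x y z : Vd d) : eBil x y * eBil (-(J y - x)) z = eBil x z * eBil (x + J z) y := by
  rw [neg_sub, sub_eq_add_neg, eBil_add_left, eBil_neg_skew_left hJ, eBil_add_left]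
  ring

end Character

section Fourier

variable {d : ℕ} {A : Type*} [NormedAddCommGroup A] [NormedSpace ℂ A]

lemma vFourier_eq_fourier (f : Vd d → A) : vFourier f = 𝓕 f := by
  ext y
  rw [vFourier, Real.fourier_eq']
  congr 1; ext v; congr 2; push_cast; ring

lemma SchwartzMap.integrable_eBil_smul_fourier (ξ : SchwartzMap (Vd d) A) (w : Vd d) :
    Integrable fun y => eBil w y • 𝓕 (⇑ξ) y := by
  have hF : Integrable (𝓕 (⇑ξ)) := (SchwartzMap.fourierTransformCLM ℂ ξ).integrable
  refine hF.norm.mono' ((continuous_eBil w).smul ?_).aestronglyMeasurable ?_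
  · exact (SchwartzMap.fourierTransformCLM ℂ ξ).continuous
  · filter_upwards with y
    rw [norm_smul, norm_eBil, one_mul]

lemma SchwartzMap.integral_eBil_smul_fourier [CompleteSpace A] (ξ : SchwartzMap (Vd d) A)
    (w : Vd d) : ∫ y, eBil w y • 𝓕 (⇑ξ) y = ξ w := by
  have h := congrFun (ξ.continuous.fourierInv_fourier_eq ξ.integrable
    (SchwartzMap.fourierTransformCLM ℂ ξ).integrable) w
  rw [Real.fourierInv_eq'] at h
  simp_rw [eBil, ← real_inner_comm w]
  push_cast at h
  simp_rw [mul_right_comm (2 * (Real.pi : ℂ)) Complex.I]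
  exact h

end Fourier

theorem stmt15_general (d : ℕ) {A : Type*} [NormedRing A] [NormedAlgebra ℂ A] [CompleteSpace A]
    (α : Vd d → (A →ₐ[ℂ] A))
    (J : Vd d →ₗ[ℝ] Vd d) (hJ : ∀ x y : Vd d, ⟪J x, y⟫ = -⟪x, J y⟫)
    (z : Vd d) (a : A)
    -- `a` homogeneous of weight `z`: `α_x(a) = e(−x·z) a`
    (ha : ∀ x : Vd d, α x a = eBil (-x) z • a) :
    -- `(a ×_J ξ)(x) = ∫ α_{Jy−x}(a) ξ̂(y) e(x·y) dy = e(x·z) a ξ(x+Jz)`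
    ∀ (ξ : SchwartzMap (Vd d) A) (x : Vd d),
      (∫ y : Vd d, eBil x y • (α (J y - x) a * vFourier (⇑ξ) y))
        = eBil x z • (a * ξ (x + J z)) := by
  intro ξ x
  have hintegrand : ∀ y, eBil x y • (α (J y - x) a * vFourier (⇑ξ) y)
      = eBil x z • (a * (eBil (x + J z) y • 𝓕 (⇑ξ) y)) := by
    intro y
    rw [vFourier_eq_fourier, ha, smul_mul_assoc, smul_smul, eBil_mul_eBil_skew hJ,
      mul_smul_comm, mul_smul]
  simp_rw [hintegrand]
  rw [integral_smul, integral_const_mul_of_integrable (ξ.integrable_eBil_smul_fourier _),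
    ξ.integral_eBil_smul_fourier]

theorem stmt15 (d : ℕ) {A : Type*} [NormedRing A] [NormedAlgebra ℂ A] [CompleteSpace A]
    (α : Vd d → (A →ₐ[ℂ] A))
    (hα0 : α 0 = AlgHom.id ℂ A)
    (hαadd : ∀ x y : Vd d, α (x + y) = (α x).comp (α y))
    (hiso : ∀ (x : Vd d) (a : A), ‖α x a‖ = ‖a‖)
    (hcont : ∀ a : A, Continuous fun x : Vd d => α x a)
    (J : Vd d →ₗ[ℝ] Vd d) (hJ : ∀ x y : Vd d, ⟪J x, y⟫ = -⟪x, J y⟫)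
    (z : Vd d) (a : A)
    -- `a` homogeneous of weight `z`: `α_x(a) = e(−x·z) a`
    (ha : ∀ x : Vd d, α x a = eBil (-x) z • a) :
    -- `(a ×_J ξ)(x) = ∫ α_{Jy−x}(a) ξ̂(y) e(x·y) dy = e(x·z) a ξ(x+Jz)`
    ∀ (ξ : SchwartzMap (Vd d) A) (x : Vd d),
      (∫ y : Vd d, eBil x y • (α (J y - x) a * vFourier (⇑ξ) y))
        = eBil x z • (a * ξ (x + J z)) :=
  stmt15_general d α J hJ z a ha
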